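/- Let n ≥ 4, let w = (a_1,...,a_m) be a reduced word for the long word w0 in S_n (so m = C(n,2)), and let A be a 4-element subset of {1,...,n}. Then the induced word of w on A is a reduced word for the long word in S_4; in particular, it has length exactly 6 = C(4,2), and the product of the corresponding adjacent transpositions in S_4 is the permutation [4,3,2,1]. -/

import Mathlib

/-- The adjacent transposition `s_a`, swapping `a` and `a+1`, as a permutation of `ℕ`. -/
def adjTransposition (a : ℕ) : Equiv.Perm ℕ := Equiv.swap a (a + 1)

/-- The long word `w₀ = [n, n-1, …, 2, 1]` in `S_n`: the permutation of `ℕ` sending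
`i` to `n + 1 - i` for `i ∈ {1, …, n}` and fixing all other natural numbers. -/
def longWord (n : ℕ) : Equiv.Perm ℕ :=
  Function.Involutive.toPerm (fun i => if 1 ≤ i ∧ i ≤ n then n + 1 - i else i)
    (by intro i; dsimp only; split_ifs <;> omega)

/-- `w` is a reduced word for the long word in `S_n`: a sequence of letters in
`{1, …, n-1}` of length `C(n,2)` whose associated product of adjacent
transpositions `s_{a_1} s_{a_2} ⋯ s_{a_m}` equals `w₀`. -/
def IsReducedWord (n : ℕ) (w : List ℕ) : Prop :=
  w.length = n.choose 2 ∧ (∀ a ∈ w, 1 ≤ a ∧ a ≤ n - 1) ∧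
    (w.map adjTransposition).prod = longWord n

/-- Auxiliary recursion computing the induced word on a subset `A` of wires:
`π` is the current permutation `π_{k-1}` (with `π j` the wire in position `j`);
at a step with letter `a`, the wires `π a` and `π (a+1)` cross, and if both lie
in `A` we record the position of `a` among the positions currently occupied by
the wires of `A`. -/
def inducedAux (A : Finset ℕ) : List ℕ → Equiv.Perm ℕ → List ℕ
  | [], _ => []
  | a :: rest, π =>
      (if π a ∈ A ∧ π (a + 1) ∈ A
        then [((Finset.Icc 1 a).filter (fun p => π p ∈ A)).card]
        else []) ++ inducedAux A rest (π * adjTransposition a)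

/-- The induced word of the word `w` on the subset `A` of wires. -/
def inducedWord (w : List ℕ) (A : Finset ℕ) : List ℕ := inducedAux A w 1

/-- The reentrant set `X` of four reduced words for the long word in `S_4`. -/
def reentrantSet : Finset (List ℕ) :=
  {[1,2,3,2,1,2], [3,2,1,2,3,2], [2,1,2,3,2,1], [2,3,2,1,2,3]}

/-!
Follow the wires of `A` through the wiring diagram of `w`. The letter recorded when two wires of `A`
cross is the rank, among the positions of the wires of `A`, of the left one; so the induced word
permutes these ranks exactly as `w` permutes the positions, and the product `τ` of the letters
induced so far sends the rank of the current position of each wire `x ∈ A` to the rank of `x` in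
`A`. At the end the wires stand in reversed order, so `τ` is the long word of `S_{#A}`. For the
length: every pair of wires crosses, since its order gets reversed, and `w` has only `C(n,2)`
letters, so each pair crosses exactly once and the induced word has `C(#A,2)` letters.
-/

open Finset

lemma adjTransposition_apply (a x : ℕ) :
    adjTransposition a x = if x = a then a + 1 else if x = a + 1 then a else x :=
  Equiv.swap_apply_def a (a + 1) x

lemma adjTransposition_apply_of_ne {a x : ℕ} (h₁ : x ≠ a) (h₂ : x ≠ a + 1) :
    adjTransposition a x = x :=
  Equiv.swap_apply_of_ne_of_ne h₁ h₂

lemma adjTransposition_adjTransposition (a x : ℕ) :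
    adjTransposition a (adjTransposition a x) = x :=
  Equiv.swap_apply_self a (a + 1) x

lemma mul_adjTransposition_inv_apply (π : Equiv.Perm ℕ) (a x : ℕ) :
    (π * adjTransposition a)⁻¹ x = adjTransposition a (π⁻¹ x) := by
  rw [mul_inv_rev, adjTransposition, Equiv.swap_inv, Equiv.Perm.mul_apply]

lemma adjTransposition_lt_adjTransposition_iff {a p q : ℕ} (h₁ : ¬(p = a ∧ q = a + 1))
    (h₂ : ¬(p = a + 1 ∧ q = a)) :
    adjTransposition a p < adjTransposition a q ↔ p < q := by
  rw [adjTransposition_apply, adjTransposition_apply]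
  split_ifs <;> omega

lemma prod_map_adjTransposition_apply_of_notMem {k : ℕ} {l : List ℕ}
    (hl : ∀ a ∈ l, 1 ≤ a ∧ a ≤ k - 1) {x : ℕ} (hx : x ∉ Icc 1 k) :
    (l.map adjTransposition).prod x = x := by
  induction l with
  | nil => rfl
  | cons a l ih =>
    have ha := hl a List.mem_cons_self
    rw [List.map_cons, List.prod_cons, Equiv.Perm.mul_apply,
      ih fun b hb => hl b (List.mem_cons_of_mem a hb), adjTransposition_apply_of_ne] <;>
      simp only [mem_Icc] at hx <;> omega

lemma longWord_inv (n : ℕ) : (longWord n)⁻¹ = longWord n := rfl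

lemma longWord_apply_of_mem {n x : ℕ} (hx : x ∈ Icc 1 n) : longWord n x = n + 1 - x :=
  if_pos (mem_Icc.mp hx)

lemma longWord_apply_of_notMem {n x : ℕ} (hx : x ∉ Icc 1 n) : longWord n x = x :=
  if_neg (mt mem_Icc.mpr hx)

/-- At a crossing at position `a`, `inducedAux` records `rankIn A π a`; `rankIn A 1 x` is the
rank of `x` in `A` when `0 ∉ A`. -/
def rankIn (A : Finset ℕ) (π : Equiv.Perm ℕ) (p : ℕ) : ℕ := #{q ∈ Icc 1 p | π q ∈ A}

section rankIn

variable {A : Finset ℕ} {π : Equiv.Perm ℕ}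

lemma rankIn_succ (A : Finset ℕ) (π : Equiv.Perm ℕ) (p : ℕ) :
    rankIn A π (p + 1) = rankIn A π p + if π (p + 1) ∈ A then 1 else 0 := by
  simp only [rankIn, card_filter]
  exact sum_Icc_succ_top (Nat.le_add_left 1 p) _

lemma rankIn_mono (A : Finset ℕ) (π : Equiv.Perm ℕ) : Monotone (rankIn A π) :=
  fun _ _ h => card_le_card (filter_subset_filter _ (Icc_subset_Icc_right h))

lemma rankIn_lt_rankIn {p q : ℕ} (hpq : p < q) (hq : π q ∈ A) :
    rankIn A π p < rankIn A π q := by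
  obtain ⟨r, rfl⟩ : ∃ r, q = r + 1 := ⟨q - 1, by omega⟩
  have := rankIn_mono A π (Nat.le_of_lt_succ hpq)
  rw [rankIn_succ, if_pos hq]
  omega

lemma rankIn_le_card (A : Finset ℕ) (π : Equiv.Perm ℕ) (p : ℕ) : rankIn A π p ≤ #A :=
  card_le_card_of_injOn π (fun _ hq => (mem_filter.mp hq).2) π.injective.injOn

lemma rankIn_mul_adjTransposition {a p : ℕ} (ha : 1 ≤ a) (hp : p ≠ a) :
    rankIn A (π * adjTransposition a) p = rankIn A π p := by
  refine card_equiv (adjTransposition a) fun q => ?_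
  have : q ∈ Icc 1 p ↔ adjTransposition a q ∈ Icc 1 p := by
    rw [mem_Icc, mem_Icc, adjTransposition_apply]
    split_ifs <;> omega
  rw [mem_filter, mem_filter, ← this]
  rfl

lemma rankIn_mul_adjTransposition_self {a : ℕ} (ha : 1 ≤ a) :
    rankIn A (π * adjTransposition a) a + (if π a ∈ A then 1 else 0)
      = rankIn A π a + if π (a + 1) ∈ A then 1 else 0 := by
  obtain ⟨b, rfl⟩ : ∃ b, a = b + 1 := ⟨a - 1, by omega⟩
  rw [rankIn_succ, rankIn_succ, rankIn_mul_adjTransposition ha (by omega),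
    Equiv.Perm.mul_apply, adjTransposition_apply, if_pos rfl]
  omega

lemma rankIn_mul_adjTransposition_apply_of_both_mem {a p : ℕ} (ha : 1 ≤ a)
    (hA : π a ∈ A ∧ π (a + 1) ∈ A) (hp : π p ∈ A) :
    rankIn A (π * adjTransposition a) (adjTransposition a p)
      = adjTransposition (rankIn A π a) (rankIn A π p) := by
  have hself := rankIn_mul_adjTransposition_self (A := A) (π := π) ha
  have hsucc := rankIn_succ A π a
  rw [if_pos hA.1] at hself
  rw [if_pos hA.2] at hself hsucc
  rw [adjTransposition_apply a p]
  split_ifs with h₁ h₂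
  · subst h₁
    rw [rankIn_mul_adjTransposition ha (by omega), hsucc, adjTransposition_apply, if_pos rfl]
  · subst h₂
    rw [hsucc, adjTransposition_apply, if_neg (by omega), if_pos rfl]
    omega
  · have hne : rankIn A π p ≠ rankIn A π a ∧ rankIn A π p ≠ rankIn A π a + 1 := by
      rcases Nat.lt_or_gt_of_ne h₁ with h | h
      · have := rankIn_lt_rankIn h hA.1
        omega
      · have := rankIn_lt_rankIn (show a + 1 < p by omega) hp
        omega
    rw [rankIn_mul_adjTransposition ha h₁, adjTransposition_apply_of_ne hne.1 hne.2]

lemma rankIn_mul_adjTransposition_apply_of_not_both_mem {a p : ℕ} (ha : 1 ≤ a)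
    (hA : ¬(π a ∈ A ∧ π (a + 1) ∈ A)) (hp : π p ∈ A) :
    rankIn A (π * adjTransposition a) (adjTransposition a p) = rankIn A π p := by
  have hself := rankIn_mul_adjTransposition_self (A := A) (π := π) ha
  have hsucc := rankIn_succ A π a
  rw [adjTransposition_apply a p]
  split_ifs with h₁ h₂
  · subst h₁
    rw [rankIn_mul_adjTransposition ha (by omega), hsucc, if_neg (fun h => hA ⟨hp, h⟩),
      add_zero]
  · subst h₂
    rw [if_neg (fun h => hA ⟨h, hp⟩), if_pos hp] at hself
    rw [hsucc, if_pos hp]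
    omega
  · exact rankIn_mul_adjTransposition ha h₁

end rankIn

lemma inducedAux_cons (A : Finset ℕ) (a : ℕ) (l : List ℕ) (π : Equiv.Perm ℕ) :
    inducedAux A (a :: l) π = (if π a ∈ A ∧ π (a + 1) ∈ A then [rankIn A π a] else [])
      ++ inducedAux A l (π * adjTransposition a) := rfl

lemma prod_inducedAux_apply_rankIn {A : Finset ℕ} {l : List ℕ} (hl : ∀ a ∈ l, 1 ≤ a)
    (π τ : Equiv.Perm ℕ) {x : ℕ} (hx : x ∈ A) :
    let σ := π * (l.map adjTransposition).prod
    (τ * ((inducedAux A l π).map adjTransposition).prod) (rankIn A σ (σ⁻¹ x))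
      = τ (rankIn A π (π⁻¹ x)) := by
  induction l generalizing π τ with
  | nil => simp [inducedAux]
  | cons a l ih =>
    have ha := hl a List.mem_cons_self
    have hp : π (π⁻¹ x) ∈ A := by rwa [Equiv.Perm.coe_inv, Equiv.apply_symm_apply]
    rw [inducedAux_cons]
    split_ifs with hA
    · have key := rankIn_mul_adjTransposition_apply_of_both_mem ha hA hp
      rw [← mul_adjTransposition_inv_apply] at key
      simp only [List.singleton_append, List.map_cons, List.prod_cons, ← mul_assoc]
      rw [ih (fun b hb => hl b (List.mem_cons_of_mem a hb)), Equiv.Perm.mul_apply, key,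
        adjTransposition_adjTransposition]
    · have key := rankIn_mul_adjTransposition_apply_of_not_both_mem ha hA hp
      rw [← mul_adjTransposition_inv_apply] at key
      simp only [List.nil_append, List.map_cons, List.prod_cons, ← mul_assoc]
      rw [ih (fun b hb => hl b (List.mem_cons_of_mem a hb)), key]

lemma mem_Icc_of_mem_inducedAux {A : Finset ℕ} {l : List ℕ} (hl : ∀ a ∈ l, 1 ≤ a)
    {π : Equiv.Perm ℕ} {j : ℕ} (hj : j ∈ inducedAux A l π) : j ∈ Icc 1 (#A - 1) := by
  induction l generalizing π with
  | nil => simp [inducedAux] at hj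
  | cons a l ih =>
    have ha := hl a List.mem_cons_self
    rw [inducedAux_cons, List.mem_append] at hj
    rcases hj with hj | hj
    · split_ifs at hj with hA
      · rw [List.mem_singleton] at hj
        subst hj
        have h₀ := rankIn_lt_rankIn (A := A) (p := 0) ha hA.1
        have h₁ := rankIn_lt_rankIn a.lt_add_one hA.2
        have h₂ := rankIn_le_card A π (a + 1)
        exact mem_Icc.mpr ⟨by omega, by omega⟩
      · simp at hj
    · exact ih (fun b hb => hl b (List.mem_cons_of_mem a hb)) hj

lemma rankIn_longWord_apply_add_rankIn_one {n : ℕ} {A : Finset ℕ} (hA : A ⊆ Icc 1 n) {x : ℕ}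
    (hx : x ∈ A) : rankIn A (longWord n) (longWord n x) + rankIn A 1 x = #A + 1 := by
  have hge : rankIn A (longWord n) (longWord n x) = #{y ∈ A | x ≤ y} := by
    refine card_equiv (longWord n) fun q => ?_
    have hxn := mem_Icc.mp (hA hx)
    rw [mem_filter, mem_filter, longWord_apply_of_mem (hA hx), mem_Icc]
    by_cases hq : q ∈ Icc 1 n
    · rw [longWord_apply_of_mem hq]
      rw [mem_Icc] at hq
      exact ⟨fun h => ⟨h.2, by omega⟩, fun h => ⟨⟨hq.1, by omega⟩, h.1⟩⟩
    · have hqA : q ∉ A := fun h => hq (hA h)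
      simp [longWord_apply_of_notMem hq, hqA]
  have hle : rankIn A 1 x = #{y ∈ A | y ≤ x} := by
    show #{q ∈ Icc 1 x | q ∈ A} = _
    congr 1
    ext q
    simp only [mem_filter, mem_Icc]
    exact ⟨fun h => ⟨h.2, h.1.2⟩, fun h => ⟨⟨(mem_Icc.mp (hA h.1)).1, h.2⟩, h.1⟩⟩
  have hunion : {y ∈ A | x ≤ y} ∪ {y ∈ A | y ≤ x} = A := by
    rw [← filter_or]; exact filter_true_of_mem fun y _ => le_total x y
  have hinter : {y ∈ A | x ≤ y} ∩ {y ∈ A | y ≤ x} = {x} := by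
    rw [← filter_and]
    ext y; simp only [mem_filter, mem_singleton]
    exact ⟨fun h => le_antisymm h.2.2 h.2.1, by rintro rfl; exact ⟨hx, le_rfl, le_rfl⟩⟩
  rw [hge, hle, ← card_union_add_card_inter, hunion, hinter, card_singleton]

lemma image_rankIn_one {A : Finset ℕ} (h₀ : 0 ∉ A) : A.image (rankIn A 1) = Icc 1 #A := by
  refine eq_of_subset_of_card_le (fun k hk => ?_) ?_
  · obtain ⟨x, hx, rfl⟩ := mem_image.mp hk
    have := rankIn_lt_rankIn (π := 1) (p := 0)
      (Nat.pos_of_ne_zero (ne_of_mem_of_not_mem hx h₀)) hx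
    exact mem_Icc.mpr ⟨by omega, rankIn_le_card A 1 x⟩
  · rw [Nat.card_Icc, Nat.add_sub_cancel, card_image_of_injOn]
    intro x hx y hy hxy
    by_contra hne
    rcases Nat.lt_or_gt_of_ne hne with h | h
    · exact (rankIn_lt_rankIn h (π := 1) hy).ne hxy
    · exact (rankIn_lt_rankIn h (π := 1) hx).ne' hxy

lemma prod_inducedWord {n : ℕ} {w : List ℕ} (hw : IsReducedWord n w) {A : Finset ℕ}
    (hA : A ⊆ Icc 1 n) : ((inducedWord w A).map adjTransposition).prod = longWord #A := by
  obtain ⟨-, hlet, hprod⟩ := hw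
  have hl : ∀ a ∈ w, 1 ≤ a := fun a ha => (hlet a ha).1
  have hrank : ∀ x ∈ A, ((inducedWord w A).map adjTransposition).prod
      (rankIn A (longWord n) (longWord n x)) = rankIn A 1 x := fun x hx => by
    simpa [hprod, longWord_inv, inducedWord] using prod_inducedAux_apply_rankIn hl 1 1 hx
  ext k
  by_cases hk : k ∈ Icc 1 #A
  · have h₀ : 0 ∉ A := fun h => by simpa using hA h
    obtain ⟨x, hx, hxk⟩ : ∃ x ∈ A, rankIn A 1 x = #A + 1 - k := by
      rw [← mem_image, image_rankIn_one h₀, mem_Icc]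
      rw [mem_Icc] at hk
      omega
    have := rankIn_longWord_apply_add_rankIn_one hA hx
    rw [longWord_apply_of_mem hk, ← hxk, ← hrank x hx]
    rw [mem_Icc] at hk
    congr 1
    omega
  · rw [longWord_apply_of_notMem hk]
    exact prod_map_adjTransposition_apply_of_notMem
      (fun j hj => mem_Icc.mp (mem_Icc_of_mem_inducedAux hl hj)) hk

def crossings : List ℕ → Equiv.Perm ℕ → List (Finset ℕ)
  | [], _ => []
  | a :: l, π => {π a, π (a + 1)} :: crossings l (π * adjTransposition a)

lemma length_crossings (l : List ℕ) (π : Equiv.Perm ℕ) :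
    (crossings l π).length = l.length := by
  induction l generalizing π with
  | nil => rfl
  | cons a l ih => simp [crossings, ih]

lemma length_inducedAux (A : Finset ℕ) (l : List ℕ) (π : Equiv.Perm ℕ) :
    (inducedAux A l π).length = (crossings l π).countP (· ⊆ A) := by
  induction l generalizing π with
  | nil => rfl
  | cons a l ih =>
    rw [inducedAux_cons, List.length_append, ih, crossings, List.countP_cons, add_comm]
    simp only [insert_subset_iff, singleton_subset_iff, decide_eq_true_eq]
    split_ifs <;> rfl

lemma inv_lt_inv_iff_of_notMem_crossings {l : List ℕ} {π : Equiv.Perm ℕ} {x y : ℕ}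
    (h : {x, y} ∉ crossings l π) :
    (π * (l.map adjTransposition).prod)⁻¹ x < (π * (l.map adjTransposition).prod)⁻¹ y
      ↔ π⁻¹ x < π⁻¹ y := by
  induction l generalizing π with
  | nil => simp
  | cons a l ih =>
    rw [crossings, List.mem_cons, not_or] at h
    rw [List.map_cons, List.prod_cons, ← mul_assoc, ih h.2, mul_adjTransposition_inv_apply,
      mul_adjTransposition_inv_apply]
    apply adjTransposition_lt_adjTransposition_iff
    · rintro ⟨hx, hy⟩
      apply h.1
      rw [← hy, ← hx, Equiv.Perm.coe_inv, Equiv.apply_symm_apply, Equiv.apply_symm_apply]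
    · rintro ⟨hx, hy⟩
      apply h.1
      rw [← hx, ← hy, Equiv.Perm.coe_inv, Equiv.apply_symm_apply, Equiv.apply_symm_apply,
        pair_comm]

lemma mem_crossings_of_prod_eq_longWord {n : ℕ} {w : List ℕ}
    (hw : (w.map adjTransposition).prod = longWord n) {x y : ℕ} (hx : 1 ≤ x) (hxy : x < y)
    (hy : y ≤ n) : {x, y} ∈ crossings w 1 := by
  by_contra h
  have := (inv_lt_inv_iff_of_notMem_crossings h).mpr (by simpa using hxy)
  rw [one_mul, hw, longWord_inv, longWord_apply_of_mem (mem_Icc.mpr ⟨hx, by omega⟩),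
    longWord_apply_of_mem (mem_Icc.mpr ⟨by omega, hy⟩)] at this
  omega

lemma toFinset_crossings {n : ℕ} {w : List ℕ} (hw : IsReducedWord n w) :
    (crossings w 1).toFinset = powersetCard 2 (Icc 1 n) ∧ (crossings w 1).Nodup := by
  obtain ⟨hlen, -, hprod⟩ := hw
  have hsub : powersetCard 2 (Icc 1 n) ⊆ (crossings w 1).toFinset := by
    intro q hq
    obtain ⟨hqn, hq2⟩ := mem_powersetCard.mp hq
    obtain ⟨x, y, hne, rfl⟩ := card_eq_two.mp hq2
    have hx := mem_Icc.mp (hqn (mem_insert_self x {y}))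
    have hy := mem_Icc.mp (hqn (mem_insert_of_mem (mem_singleton_self y)))
    rw [List.mem_toFinset]
    rcases Nat.lt_or_gt_of_ne hne with h | h
    · exact mem_crossings_of_prod_eq_longWord hprod hx.1 h hy.2
    · rw [pair_comm]
      exact mem_crossings_of_prod_eq_longWord hprod hy.1 h hx.2
  have hcard : #(powersetCard 2 (Icc 1 n)) = (crossings w 1).length := by
    rw [card_powersetCard, Nat.card_Icc, Nat.add_sub_cancel, length_crossings, hlen]
  have heq := eq_of_subset_of_card_le hsub (hcard ▸ List.toFinset_card_le _)
  refine ⟨heq.symm, Multiset.coe_nodup.mp (Multiset.toFinset_card_eq_card_iff_nodup.mp ?_)⟩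
  exact (congrArg card heq).symm.trans hcard

lemma length_inducedWord {n : ℕ} {w : List ℕ} (hw : IsReducedWord n w) {A : Finset ℕ}
    (hA : A ⊆ Icc 1 n) : (inducedWord w A).length = (#A).choose 2 := by
  obtain ⟨htoFinset, hnodup⟩ := toFinset_crossings hw
  have hfilter : {q ∈ powersetCard 2 (Icc 1 n) | q ⊆ A} = powersetCard 2 A := by
    ext q
    simp only [mem_filter, mem_powersetCard]
    exact ⟨fun h => ⟨h.2, h.1.2⟩, fun h => ⟨⟨h.1.trans hA, h.2⟩, h.1⟩⟩
  rw [inducedWord, length_inducedAux, ← hnodup.card_eq_countP, htoFinset, hfilter,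
    card_powersetCard]

theorem isReducedWord_inducedWord {n : ℕ} {w : List ℕ} (hw : IsReducedWord n w)
    {A : Finset ℕ} (hA : A ⊆ Icc 1 n) : IsReducedWord #A (inducedWord w A) :=
  ⟨length_inducedWord hw hA,
    fun _ hj => mem_Icc.mp (mem_Icc_of_mem_inducedAux (fun a ha => (hw.2.1 a ha).1) hj),
    prod_inducedWord hw hA⟩

theorem inducedWord_isReducedWord_S4_general (n : ℕ) (w : List ℕ)
    (hw : IsReducedWord n w) (A : Finset ℕ) (hA : A ⊆ Finset.Icc 1 n)
    (hA4 : A.card = 4) :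
    IsReducedWord 4 (inducedWord w A) ∧
    (inducedWord w A).length = 6 ∧
    ((inducedWord w A).map adjTransposition).prod = longWord 4 := by
  have h := isReducedWord_inducedWord hw hA
  rw [hA4] at h
  exact ⟨h, h.1, h.2.2⟩

/-- For `n ≥ 4`, any reduced word `w` for the long word in `S_n`, and any
4-element subset `A ⊆ {1,…,n}`, the induced word of `w` on `A` is a reduced word
for the long word in `S₄`: in particular it has length exactly `6 = C(4,2)` and
the product of the corresponding adjacent transpositions is the permutation
`[4,3,2,1]`. -/
theorem inducedWord_isReducedWord_S4 (n : ℕ) (hn : 4 ≤ n) (w : List ℕ)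
    (hw : IsReducedWord n w) (A : Finset ℕ) (hA : A ⊆ Finset.Icc 1 n)
    (hA4 : A.card = 4) :
    IsReducedWord 4 (inducedWord w A) ∧
    (inducedWord w A).length = 6 ∧
    ((inducedWord w A).map adjTransposition).prod = longWord 4 :=
  inducedWord_isReducedWord_S4_general n w hw A hA hA4
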